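/- arXiv:math-ph/9812007 — 2 statements merged into one kernel-verified Lean document; each statement's English description precedes it below -/
import Mathlib

section
/- Let v : ℝ × ℝ³ → ℝ³ be a smooth time-dependent vector field and let f₁, f₂, f₃ : ℝ × ℝ³ → ℝ be smooth scalars each advected by v (∂f_i/∂t + v·∇f_i = 0 for i = 1,2,3). Then the Jacobian density J := ∇f₁·(∇f₂ × ∇f₃) satisfies the continuity equation ∂J/∂t + ∇·(J v) = 0 at every point of ℝ × ℝ³. -/
noncomputable section

open Matrix MeasureTheory

/-- Points of `ℝ³`, as functions `Fin 3 → ℝ`. -/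
abbrev V3 : Type := Fin 3 → ℝ

/-- The `i`-th standard basis vector of `ℝ³`. -/
def e3 (i : Fin 3) : V3 := Pi.single i 1

/-- Time derivative `∂f/∂t` of a time-dependent scalar field on `ℝ × ℝ³`. -/
def dtS (f : ℝ × V3 → ℝ) (q : ℝ × V3) : ℝ :=
  deriv (fun s => f (s, q.2)) q.1

/-- Spatial partial derivative `∂f/∂xᵢ` of a time-dependent scalar field. -/
def pd (i : Fin 3) (f : ℝ × V3 → ℝ) (q : ℝ × V3) : ℝ :=
  fderiv ℝ (fun y => f (q.1, y)) q.2 (e3 i)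

/-- Spatial gradient `∇f`. -/
def grad3 (f : ℝ × V3 → ℝ) (q : ℝ × V3) : V3 := fun i => pd i f q

/-- Time derivative `∂u/∂t` of a time-dependent vector field, componentwise. -/
def dtV (u : ℝ × V3 → V3) (q : ℝ × V3) : V3 := fun i => dtS (fun r => u r i) q

/-- Spatial divergence `∇·u`. -/
def div3 (u : ℝ × V3 → V3) (q : ℝ × V3) : ℝ := ∑ i, pd i (fun r => u r i) q

/-- Spatial curl `∇×u`. -/
def curl3 (u : ℝ × V3 → V3) (q : ℝ × V3) : V3 :=
  ![pd 1 (fun r => u r 2) q - pd 2 (fun r => u r 1) q,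
    pd 2 (fun r => u r 0) q - pd 0 (fun r => u r 2) q,
    pd 0 (fun r => u r 1) q - pd 1 (fun r => u r 0) q]

/-- Directional derivative `(v·∇)w` of a vector field along another. -/
def dirD (v w : ℝ × V3 → V3) (q : ℝ × V3) : V3 :=
  fun i => ∑ j, v q j * pd j (fun r => w r i) q

/-- Advective derivative `v·∇f` of a scalar field along `v`. -/
def adv (v : ℝ × V3 → V3) (f : ℝ × V3 → ℝ) (q : ℝ × V3) : ℝ :=
  ∑ j, v q j * pd j f q

/-- directional derivative of scalar field on ℝ × V3 -/
def Dd (w : ℝ × V3) (f : ℝ × V3 → ℝ) (q : ℝ × V3) : ℝ := fderiv ℝ f q w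

lemma Dd_contDiff {f : ℝ × V3 → ℝ} (w : ℝ × V3) (hf : ContDiff ℝ (⊤ : ℕ∞) f) :
    ContDiff ℝ (⊤ : ℕ∞) (Dd w f) :=
  (hf.fderiv_right (by simp)).clm_apply contDiff_const

lemma dtS_eq {f : ℝ × V3 → ℝ} (hf : ContDiff ℝ (⊤ : ℕ∞) f) (q : ℝ × V3) :
    dtS f q = Dd (1, 0) f q := by
  have h1 : HasDerivAt (fun s : ℝ => (s, q.2)) ((1 : ℝ), (0 : V3)) q.1 :=
    (hasDerivAt_id q.1).prodMk (hasDerivAt_const _ _)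
  have h2 : HasFDerivAt f (fderiv ℝ f q) q :=
    (hf.differentiable (by simp) q).hasFDerivAt
  have := (h2.comp_hasDerivAt q.1 (by simpa using h1))
  simpa [dtS, Dd, Function.comp_def] using this.deriv

lemma pd_eq {f : ℝ × V3 → ℝ} (hf : ContDiff ℝ (⊤ : ℕ∞) f) (i : Fin 3) (q : ℝ × V3) :
    pd i f q = Dd (0, e3 i) f q := by
  have h1 : HasFDerivAt (fun y : V3 => (q.1, y)) (ContinuousLinearMap.inr ℝ ℝ V3) q.2 :=
    (hasFDerivAt_const q.1 q.2).prodMk (hasFDerivAt_id q.2)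
  have h2 : HasFDerivAt f (fderiv ℝ f q) q :=
    (hf.differentiable (by simp) q).hasFDerivAt
  have := (h2.comp q.2 (by simpa using h1)).fderiv
  have h3 : (fun y => f (q.1, y)) = f ∘ (fun y : V3 => (q.1, y)) := rfl
  simp only [pd, Dd, h3, this]
  simp

lemma Dd_add {f g : ℝ × V3 → ℝ} (hf : Differentiable ℝ f) (hg : Differentiable ℝ g)
    (w : ℝ × V3) (q : ℝ × V3) :
    Dd w (fun r => f r + g r) q = Dd w f q + Dd w g q := by
  simp [Dd, fderiv_fun_add (hf q) (hg q)]

lemma Dd_sub {f g : ℝ × V3 → ℝ} (hf : Differentiable ℝ f) (hg : Differentiable ℝ g)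
    (w : ℝ × V3) (q : ℝ × V3) :
    Dd w (fun r => f r - g r) q = Dd w f q - Dd w g q := by
  simp [Dd, fderiv_fun_sub (hf q) (hg q)]

lemma Dd_mul {f g : ℝ × V3 → ℝ} (hf : Differentiable ℝ f) (hg : Differentiable ℝ g)
    (w : ℝ × V3) (q : ℝ × V3) :
    Dd w (fun r => f r * g r) q = Dd w f q * g q + f q * Dd w g q := by
  simp [Dd, fderiv_fun_mul (hf q) (hg q)]
  ring

lemma Dd_snd {f : ℝ × V3 → ℝ} (hf : ContDiff ℝ (⊤ : ℕ∞) f) (w w' : ℝ × V3) (q : ℝ × V3) :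
    Dd w (Dd w' f) q = fderiv ℝ (fderiv ℝ f) q w w' := by
  have hc : DifferentiableAt ℝ (fderiv ℝ f) q :=
    ((hf.fderiv_right (m := 1) (by exact WithTop.coe_le_coe.mpr le_top)).differentiable one_ne_zero q)
  have : Dd w' f = fun r => (fderiv ℝ f r) w' := rfl
  rw [Dd, this, fderiv_clm_apply hc (differentiableAt_const _)]
  simp

lemma Dd_comm {f : ℝ × V3 → ℝ} (hf : ContDiff ℝ (⊤ : ℕ∞) f) (w w' : ℝ × V3) (q : ℝ × V3) :
    Dd w (Dd w' f) q = Dd w' (Dd w f) q := by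
  rw [Dd_snd hf, Dd_snd hf]
  exact second_derivative_symmetric
    (fun y => ((hf.differentiable (by simp)) y).hasFDerivAt)
    (((hf.fderiv_right (m := 1) (by exact WithTop.coe_le_coe.mpr le_top)).differentiable one_ne_zero q).hasFDerivAt) w w'

lemma Dd_zero (w : ℝ × V3) (q : ℝ × V3) : Dd w (fun _ => (0:ℝ)) q = 0 := by
  simp [Dd]

set_option maxHeartbeats 2000000 in
/-- If `f₁, f₂, f₃` are smooth scalars advected by a smooth `v`, then the
Jacobian density `J = ∇f₁·(∇f₂ × ∇f₃)` satisfies the continuity equation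
`∂J/∂t + ∇·(J v) = 0` everywhere. -/
theorem jacobian_density_continuity
    (v : ℝ × V3 → V3) (f₁ f₂ f₃ : ℝ × V3 → ℝ)
    (hv : ContDiff ℝ (⊤ : ℕ∞) v)
    (hf₁ : ContDiff ℝ (⊤ : ℕ∞) f₁) (hf₂ : ContDiff ℝ (⊤ : ℕ∞) f₂) (hf₃ : ContDiff ℝ (⊤ : ℕ∞) f₃)
    (ha₁ : ∀ q, dtS f₁ q + adv v f₁ q = 0)
    (ha₂ : ∀ q, dtS f₂ q + adv v f₂ q = 0)
    (ha₃ : ∀ q, dtS f₃ q + adv v f₃ q = 0) :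
    ∀ q, dtS (fun r => grad3 f₁ r ⬝ᵥ crossProduct (grad3 f₂ r) (grad3 f₃ r)) q
      + div3 (fun r => (grad3 f₁ r ⬝ᵥ crossProduct (grad3 f₂ r) (grad3 f₃ r)) • v r) q
      = 0 := by
  intro q
  have hv0 : ContDiff ℝ (⊤ : ℕ∞) (fun r => v r 0) := contDiff_pi.mp hv 0
  have dv0 : Differentiable ℝ (fun r => v r 0) := hv0.differentiable (by simp)
  have hv1 : ContDiff ℝ (⊤ : ℕ∞) (fun r => v r 1) := contDiff_pi.mp hv 1
  have dv1 : Differentiable ℝ (fun r => v r 1) := hv1.differentiable (by simp)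
  have hv2 : ContDiff ℝ (⊤ : ℕ∞) (fun r => v r 2) := contDiff_pi.mp hv 2
  have dv2 : Differentiable ℝ (fun r => v r 2) := hv2.differentiable (by simp)
  have hA10 : ContDiff ℝ (⊤ : ℕ∞) (Dd ((0:ℝ), e3 0) f₁) := Dd_contDiff _ hf₁
  have dA10 : Differentiable ℝ (Dd ((0:ℝ), e3 0) f₁) := hA10.differentiable (by simp)
  have hA11 : ContDiff ℝ (⊤ : ℕ∞) (Dd ((0:ℝ), e3 1) f₁) := Dd_contDiff _ hf₁
  have dA11 : Differentiable ℝ (Dd ((0:ℝ), e3 1) f₁) := hA11.differentiable (by simp)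
  have hA12 : ContDiff ℝ (⊤ : ℕ∞) (Dd ((0:ℝ), e3 2) f₁) := Dd_contDiff _ hf₁
  have dA12 : Differentiable ℝ (Dd ((0:ℝ), e3 2) f₁) := hA12.differentiable (by simp)
  have dT1 : Differentiable ℝ (Dd ((1:ℝ), (0:V3)) f₁) := (Dd_contDiff _ hf₁).differentiable (by simp)
  have hA20 : ContDiff ℝ (⊤ : ℕ∞) (Dd ((0:ℝ), e3 0) f₂) := Dd_contDiff _ hf₂
  have dA20 : Differentiable ℝ (Dd ((0:ℝ), e3 0) f₂) := hA20.differentiable (by simp)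
  have hA21 : ContDiff ℝ (⊤ : ℕ∞) (Dd ((0:ℝ), e3 1) f₂) := Dd_contDiff _ hf₂
  have dA21 : Differentiable ℝ (Dd ((0:ℝ), e3 1) f₂) := hA21.differentiable (by simp)
  have hA22 : ContDiff ℝ (⊤ : ℕ∞) (Dd ((0:ℝ), e3 2) f₂) := Dd_contDiff _ hf₂
  have dA22 : Differentiable ℝ (Dd ((0:ℝ), e3 2) f₂) := hA22.differentiable (by simp)
  have dT2 : Differentiable ℝ (Dd ((1:ℝ), (0:V3)) f₂) := (Dd_contDiff _ hf₂).differentiable (by simp)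
  have hA30 : ContDiff ℝ (⊤ : ℕ∞) (Dd ((0:ℝ), e3 0) f₃) := Dd_contDiff _ hf₃
  have dA30 : Differentiable ℝ (Dd ((0:ℝ), e3 0) f₃) := hA30.differentiable (by simp)
  have hA31 : ContDiff ℝ (⊤ : ℕ∞) (Dd ((0:ℝ), e3 1) f₃) := Dd_contDiff _ hf₃
  have dA31 : Differentiable ℝ (Dd ((0:ℝ), e3 1) f₃) := hA31.differentiable (by simp)
  have hA32 : ContDiff ℝ (⊤ : ℕ∞) (Dd ((0:ℝ), e3 2) f₃) := Dd_contDiff _ hf₃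
  have dA32 : Differentiable ℝ (Dd ((0:ℝ), e3 2) f₃) := hA32.differentiable (by simp)
  have dT3 : Differentiable ℝ (Dd ((1:ℝ), (0:V3)) f₃) := (Dd_contDiff _ hf₃).differentiable (by simp)
  have hJr : ∀ r, grad3 f₁ r ⬝ᵥ crossProduct (grad3 f₂ r) (grad3 f₃ r)
      = Dd ((0:ℝ), e3 0) f₁ r * (Dd ((0:ℝ), e3 1) f₂ r * Dd ((0:ℝ), e3 2) f₃ r - Dd ((0:ℝ), e3 2) f₂ r * Dd ((0:ℝ), e3 1) f₃ r)
      + Dd ((0:ℝ), e3 1) f₁ r * (Dd ((0:ℝ), e3 2) f₂ r * Dd ((0:ℝ), e3 0) f₃ r - Dd ((0:ℝ), e3 0) f₂ r * Dd ((0:ℝ), e3 2) f₃ r)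
      + Dd ((0:ℝ), e3 2) f₁ r * (Dd ((0:ℝ), e3 0) f₂ r * Dd ((0:ℝ), e3 1) f₃ r - Dd ((0:ℝ), e3 1) f₂ r * Dd ((0:ℝ), e3 0) f₃ r) := by
    intro r
    simp only [grad3, cross_apply, dotProduct, Fin.sum_univ_three, pd_eq hf₁, pd_eq hf₂, pd_eq hf₃]
    simp [Matrix.cons_val_zero, Matrix.cons_val_one]
    try ring
  have hJ : ContDiff ℝ (⊤ : ℕ∞) (fun r =>
      Dd ((0:ℝ), e3 0) f₁ r * (Dd ((0:ℝ), e3 1) f₂ r * Dd ((0:ℝ), e3 2) f₃ r - Dd ((0:ℝ), e3 2) f₂ r * Dd ((0:ℝ), e3 1) f₃ r)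
      + Dd ((0:ℝ), e3 1) f₁ r * (Dd ((0:ℝ), e3 2) f₂ r * Dd ((0:ℝ), e3 0) f₃ r - Dd ((0:ℝ), e3 0) f₂ r * Dd ((0:ℝ), e3 2) f₃ r)
      + Dd ((0:ℝ), e3 2) f₁ r * (Dd ((0:ℝ), e3 0) f₂ r * Dd ((0:ℝ), e3 1) f₃ r - Dd ((0:ℝ), e3 1) f₂ r * Dd ((0:ℝ), e3 0) f₃ r)) := by fun_prop
  have dJ : Differentiable ℝ (fun r =>
      Dd ((0:ℝ), e3 0) f₁ r * (Dd ((0:ℝ), e3 1) f₂ r * Dd ((0:ℝ), e3 2) f₃ r - Dd ((0:ℝ), e3 2) f₂ r * Dd ((0:ℝ), e3 1) f₃ r)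
      + Dd ((0:ℝ), e3 1) f₁ r * (Dd ((0:ℝ), e3 2) f₂ r * Dd ((0:ℝ), e3 0) f₃ r - Dd ((0:ℝ), e3 0) f₂ r * Dd ((0:ℝ), e3 2) f₃ r)
      + Dd ((0:ℝ), e3 2) f₁ r * (Dd ((0:ℝ), e3 0) f₂ r * Dd ((0:ℝ), e3 1) f₃ r - Dd ((0:ℝ), e3 1) f₂ r * Dd ((0:ℝ), e3 0) f₃ r)) := hJ.differentiable (by simp)
  have hP0 : ContDiff ℝ (⊤ : ℕ∞) (fun r =>
      (Dd ((0:ℝ), e3 0) f₁ r * (Dd ((0:ℝ), e3 1) f₂ r * Dd ((0:ℝ), e3 2) f₃ r - Dd ((0:ℝ), e3 2) f₂ r * Dd ((0:ℝ), e3 1) f₃ r)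
      + Dd ((0:ℝ), e3 1) f₁ r * (Dd ((0:ℝ), e3 2) f₂ r * Dd ((0:ℝ), e3 0) f₃ r - Dd ((0:ℝ), e3 0) f₂ r * Dd ((0:ℝ), e3 2) f₃ r)
      + Dd ((0:ℝ), e3 2) f₁ r * (Dd ((0:ℝ), e3 0) f₂ r * Dd ((0:ℝ), e3 1) f₃ r - Dd ((0:ℝ), e3 1) f₂ r * Dd ((0:ℝ), e3 0) f₃ r)) * v r 0) := hJ.mul hv0
  have hP1 : ContDiff ℝ (⊤ : ℕ∞) (fun r =>
      (Dd ((0:ℝ), e3 0) f₁ r * (Dd ((0:ℝ), e3 1) f₂ r * Dd ((0:ℝ), e3 2) f₃ r - Dd ((0:ℝ), e3 2) f₂ r * Dd ((0:ℝ), e3 1) f₃ r)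
      + Dd ((0:ℝ), e3 1) f₁ r * (Dd ((0:ℝ), e3 2) f₂ r * Dd ((0:ℝ), e3 0) f₃ r - Dd ((0:ℝ), e3 0) f₂ r * Dd ((0:ℝ), e3 2) f₃ r)
      + Dd ((0:ℝ), e3 2) f₁ r * (Dd ((0:ℝ), e3 0) f₂ r * Dd ((0:ℝ), e3 1) f₃ r - Dd ((0:ℝ), e3 1) f₂ r * Dd ((0:ℝ), e3 0) f₃ r)) * v r 1) := hJ.mul hv1
  have hP2 : ContDiff ℝ (⊤ : ℕ∞) (fun r =>
      (Dd ((0:ℝ), e3 0) f₁ r * (Dd ((0:ℝ), e3 1) f₂ r * Dd ((0:ℝ), e3 2) f₃ r - Dd ((0:ℝ), e3 2) f₂ r * Dd ((0:ℝ), e3 1) f₃ r)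
      + Dd ((0:ℝ), e3 1) f₁ r * (Dd ((0:ℝ), e3 2) f₂ r * Dd ((0:ℝ), e3 0) f₃ r - Dd ((0:ℝ), e3 0) f₂ r * Dd ((0:ℝ), e3 2) f₃ r)
      + Dd ((0:ℝ), e3 2) f₁ r * (Dd ((0:ℝ), e3 0) f₂ r * Dd ((0:ℝ), e3 1) f₃ r - Dd ((0:ℝ), e3 1) f₂ r * Dd ((0:ℝ), e3 0) f₃ r)) * v r 2) := hJ.mul hv2
  have hE1 : (fun r => Dd ((1:ℝ), (0:V3)) f₁ r + (v r 0 * Dd ((0:ℝ), e3 0) f₁ r + v r 1 * Dd ((0:ℝ), e3 1) f₁ r + v r 2 * Dd ((0:ℝ), e3 2) f₁ r)) = (fun _ => (0:ℝ)) := by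
    funext r
    have h := ha₁ r
    simp only [adv, Fin.sum_univ_three, dtS_eq hf₁, pd_eq hf₁] at h
    linarith
  have h10 : Dd ((0:ℝ), e3 0) (fun r => Dd ((1:ℝ), (0:V3)) f₁ r + (v r 0 * Dd ((0:ℝ), e3 0) f₁ r + v r 1 * Dd ((0:ℝ), e3 1) f₁ r + v r 2 * Dd ((0:ℝ), e3 2) f₁ r)) q = 0 := by
    rw [hE1]; exact Dd_zero _ _
  have h11 : Dd ((0:ℝ), e3 1) (fun r => Dd ((1:ℝ), (0:V3)) f₁ r + (v r 0 * Dd ((0:ℝ), e3 0) f₁ r + v r 1 * Dd ((0:ℝ), e3 1) f₁ r + v r 2 * Dd ((0:ℝ), e3 2) f₁ r)) q = 0 := by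
    rw [hE1]; exact Dd_zero _ _
  have h12 : Dd ((0:ℝ), e3 2) (fun r => Dd ((1:ℝ), (0:V3)) f₁ r + (v r 0 * Dd ((0:ℝ), e3 0) f₁ r + v r 1 * Dd ((0:ℝ), e3 1) f₁ r + v r 2 * Dd ((0:ℝ), e3 2) f₁ r)) q = 0 := by
    rw [hE1]; exact Dd_zero _ _
  have hE2 : (fun r => Dd ((1:ℝ), (0:V3)) f₂ r + (v r 0 * Dd ((0:ℝ), e3 0) f₂ r + v r 1 * Dd ((0:ℝ), e3 1) f₂ r + v r 2 * Dd ((0:ℝ), e3 2) f₂ r)) = (fun _ => (0:ℝ)) := by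
    funext r
    have h := ha₂ r
    simp only [adv, Fin.sum_univ_three, dtS_eq hf₂, pd_eq hf₂] at h
    linarith
  have h20 : Dd ((0:ℝ), e3 0) (fun r => Dd ((1:ℝ), (0:V3)) f₂ r + (v r 0 * Dd ((0:ℝ), e3 0) f₂ r + v r 1 * Dd ((0:ℝ), e3 1) f₂ r + v r 2 * Dd ((0:ℝ), e3 2) f₂ r)) q = 0 := by
    rw [hE2]; exact Dd_zero _ _
  have h21 : Dd ((0:ℝ), e3 1) (fun r => Dd ((1:ℝ), (0:V3)) f₂ r + (v r 0 * Dd ((0:ℝ), e3 0) f₂ r + v r 1 * Dd ((0:ℝ), e3 1) f₂ r + v r 2 * Dd ((0:ℝ), e3 2) f₂ r)) q = 0 := by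
    rw [hE2]; exact Dd_zero _ _
  have h22 : Dd ((0:ℝ), e3 2) (fun r => Dd ((1:ℝ), (0:V3)) f₂ r + (v r 0 * Dd ((0:ℝ), e3 0) f₂ r + v r 1 * Dd ((0:ℝ), e3 1) f₂ r + v r 2 * Dd ((0:ℝ), e3 2) f₂ r)) q = 0 := by
    rw [hE2]; exact Dd_zero _ _
  have hE3 : (fun r => Dd ((1:ℝ), (0:V3)) f₃ r + (v r 0 * Dd ((0:ℝ), e3 0) f₃ r + v r 1 * Dd ((0:ℝ), e3 1) f₃ r + v r 2 * Dd ((0:ℝ), e3 2) f₃ r)) = (fun _ => (0:ℝ)) := by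
    funext r
    have h := ha₃ r
    simp only [adv, Fin.sum_univ_three, dtS_eq hf₃, pd_eq hf₃] at h
    linarith
  have h30 : Dd ((0:ℝ), e3 0) (fun r => Dd ((1:ℝ), (0:V3)) f₃ r + (v r 0 * Dd ((0:ℝ), e3 0) f₃ r + v r 1 * Dd ((0:ℝ), e3 1) f₃ r + v r 2 * Dd ((0:ℝ), e3 2) f₃ r)) q = 0 := by
    rw [hE3]; exact Dd_zero _ _
  have h31 : Dd ((0:ℝ), e3 1) (fun r => Dd ((1:ℝ), (0:V3)) f₃ r + (v r 0 * Dd ((0:ℝ), e3 0) f₃ r + v r 1 * Dd ((0:ℝ), e3 1) f₃ r + v r 2 * Dd ((0:ℝ), e3 2) f₃ r)) q = 0 := by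
    rw [hE3]; exact Dd_zero _ _
  have h32 : Dd ((0:ℝ), e3 2) (fun r => Dd ((1:ℝ), (0:V3)) f₃ r + (v r 0 * Dd ((0:ℝ), e3 0) f₃ r + v r 1 * Dd ((0:ℝ), e3 1) f₃ r + v r 2 * Dd ((0:ℝ), e3 2) f₃ r)) q = 0 := by
    rw [hE3]; exact Dd_zero _ _
  simp (disch := fun_prop) only [Dd_add, Dd_mul] at h10 h11 h12 h20 h21 h22 h30 h31 h32
  have st10 : Dd ((0:ℝ), e3 0) (Dd ((1:ℝ), (0:V3)) f₁) q = Dd ((1:ℝ), (0:V3)) (Dd ((0:ℝ), e3 0) f₁) q := Dd_comm hf₁ _ _ _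
  have st11 : Dd ((0:ℝ), e3 1) (Dd ((1:ℝ), (0:V3)) f₁) q = Dd ((1:ℝ), (0:V3)) (Dd ((0:ℝ), e3 1) f₁) q := Dd_comm hf₁ _ _ _
  have st12 : Dd ((0:ℝ), e3 2) (Dd ((1:ℝ), (0:V3)) f₁) q = Dd ((1:ℝ), (0:V3)) (Dd ((0:ℝ), e3 2) f₁) q := Dd_comm hf₁ _ _ _
  have ss110 : Dd ((0:ℝ), e3 1) (Dd ((0:ℝ), e3 0) f₁) q = Dd ((0:ℝ), e3 0) (Dd ((0:ℝ), e3 1) f₁) q := Dd_comm hf₁ _ _ _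
  have ss120 : Dd ((0:ℝ), e3 2) (Dd ((0:ℝ), e3 0) f₁) q = Dd ((0:ℝ), e3 0) (Dd ((0:ℝ), e3 2) f₁) q := Dd_comm hf₁ _ _ _
  have ss121 : Dd ((0:ℝ), e3 2) (Dd ((0:ℝ), e3 1) f₁) q = Dd ((0:ℝ), e3 1) (Dd ((0:ℝ), e3 2) f₁) q := Dd_comm hf₁ _ _ _
  have st20 : Dd ((0:ℝ), e3 0) (Dd ((1:ℝ), (0:V3)) f₂) q = Dd ((1:ℝ), (0:V3)) (Dd ((0:ℝ), e3 0) f₂) q := Dd_comm hf₂ _ _ _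
  have st21 : Dd ((0:ℝ), e3 1) (Dd ((1:ℝ), (0:V3)) f₂) q = Dd ((1:ℝ), (0:V3)) (Dd ((0:ℝ), e3 1) f₂) q := Dd_comm hf₂ _ _ _
  have st22 : Dd ((0:ℝ), e3 2) (Dd ((1:ℝ), (0:V3)) f₂) q = Dd ((1:ℝ), (0:V3)) (Dd ((0:ℝ), e3 2) f₂) q := Dd_comm hf₂ _ _ _
  have ss210 : Dd ((0:ℝ), e3 1) (Dd ((0:ℝ), e3 0) f₂) q = Dd ((0:ℝ), e3 0) (Dd ((0:ℝ), e3 1) f₂) q := Dd_comm hf₂ _ _ _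
  have ss220 : Dd ((0:ℝ), e3 2) (Dd ((0:ℝ), e3 0) f₂) q = Dd ((0:ℝ), e3 0) (Dd ((0:ℝ), e3 2) f₂) q := Dd_comm hf₂ _ _ _
  have ss221 : Dd ((0:ℝ), e3 2) (Dd ((0:ℝ), e3 1) f₂) q = Dd ((0:ℝ), e3 1) (Dd ((0:ℝ), e3 2) f₂) q := Dd_comm hf₂ _ _ _
  have st30 : Dd ((0:ℝ), e3 0) (Dd ((1:ℝ), (0:V3)) f₃) q = Dd ((1:ℝ), (0:V3)) (Dd ((0:ℝ), e3 0) f₃) q := Dd_comm hf₃ _ _ _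
  have st31 : Dd ((0:ℝ), e3 1) (Dd ((1:ℝ), (0:V3)) f₃) q = Dd ((1:ℝ), (0:V3)) (Dd ((0:ℝ), e3 1) f₃) q := Dd_comm hf₃ _ _ _
  have st32 : Dd ((0:ℝ), e3 2) (Dd ((1:ℝ), (0:V3)) f₃) q = Dd ((1:ℝ), (0:V3)) (Dd ((0:ℝ), e3 2) f₃) q := Dd_comm hf₃ _ _ _
  have ss310 : Dd ((0:ℝ), e3 1) (Dd ((0:ℝ), e3 0) f₃) q = Dd ((0:ℝ), e3 0) (Dd ((0:ℝ), e3 1) f₃) q := Dd_comm hf₃ _ _ _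
  have ss320 : Dd ((0:ℝ), e3 2) (Dd ((0:ℝ), e3 0) f₃) q = Dd ((0:ℝ), e3 0) (Dd ((0:ℝ), e3 2) f₃) q := Dd_comm hf₃ _ _ _
  have ss321 : Dd ((0:ℝ), e3 2) (Dd ((0:ℝ), e3 1) f₃) q = Dd ((0:ℝ), e3 1) (Dd ((0:ℝ), e3 2) f₃) q := Dd_comm hf₃ _ _ _
  simp only [hJr]
  rw [dtS_eq hJ q]
  simp only [div3, Fin.sum_univ_three, Pi.smul_apply, smul_eq_mul]
  rw [pd_eq hP0 0 q, pd_eq hP1 1 q, pd_eq hP2 2 q]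
  simp (disch := fun_prop) only [Dd_add, Dd_sub, Dd_mul]
  simp only [st10, st11, st12, ss110, ss120, ss121, st20, st21, st22, ss210, ss220, ss221, st30, st31, st32, ss310, ss320, ss321] at h10 h11 h12 h20 h21 h22 h30 h31 h32 ⊢
  linear_combination
    (Dd ((0:ℝ), e3 1) f₂ q * Dd ((0:ℝ), e3 2) f₃ q - Dd ((0:ℝ), e3 2) f₂ q * Dd ((0:ℝ), e3 1) f₃ q) * h10
    + (Dd ((0:ℝ), e3 2) f₂ q * Dd ((0:ℝ), e3 0) f₃ q - Dd ((0:ℝ), e3 0) f₂ q * Dd ((0:ℝ), e3 2) f₃ q) * h11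
    + (Dd ((0:ℝ), e3 0) f₂ q * Dd ((0:ℝ), e3 1) f₃ q - Dd ((0:ℝ), e3 1) f₂ q * Dd ((0:ℝ), e3 0) f₃ q) * h12
    + (Dd ((0:ℝ), e3 2) f₁ q * Dd ((0:ℝ), e3 1) f₃ q - Dd ((0:ℝ), e3 1) f₁ q * Dd ((0:ℝ), e3 2) f₃ q) * h20
    + (Dd ((0:ℝ), e3 0) f₁ q * Dd ((0:ℝ), e3 2) f₃ q - Dd ((0:ℝ), e3 2) f₁ q * Dd ((0:ℝ), e3 0) f₃ q) * h21
    + (Dd ((0:ℝ), e3 1) f₁ q * Dd ((0:ℝ), e3 0) f₃ q - Dd ((0:ℝ), e3 0) f₁ q * Dd ((0:ℝ), e3 1) f₃ q) * h22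
    + (Dd ((0:ℝ), e3 1) f₁ q * Dd ((0:ℝ), e3 2) f₂ q - Dd ((0:ℝ), e3 2) f₁ q * Dd ((0:ℝ), e3 1) f₂ q) * h30
    + (Dd ((0:ℝ), e3 2) f₁ q * Dd ((0:ℝ), e3 0) f₂ q - Dd ((0:ℝ), e3 0) f₁ q * Dd ((0:ℝ), e3 2) f₂ q) * h31
    + (Dd ((0:ℝ), e3 0) f₁ q * Dd ((0:ℝ), e3 1) f₂ q - Dd ((0:ℝ), e3 1) f₁ q * Dd ((0:ℝ), e3 0) f₂ q) * h32
end
end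

section
/- Let v, A, C : ℝ × ℝ³ → ℝ³ be smooth with v divergence-free (∇·v(t,·) = 0), C divergence-free with ∂C/∂t = ∇×(v×C), and suppose A satisfies ∂A/∂t + (∇×A)×v = ∇ψ with the gauge condition ψ = −v·A (i.e. the potential one-form −ψ dt − A·dx annihilates ∂_t + v). Then the helicity density A·C is a Lagrangian invariant: ∂(A·C)/∂t + v·∇(A·C) = 0 at every point of ℝ × ℝ³, i.e. A·C is conserved at each point along trajectories of v. -/
noncomputable section

open Matrix MeasureTheory

lemma diffX {f : ℝ × V3 → ℝ} (hf : ContDiff ℝ (⊤ : ℕ∞) f) (q : ℝ × V3) :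
    DifferentiableAt ℝ (fun y => f (q.1, y)) q.2 :=
  ((hf.comp (contDiff_const.prodMk contDiff_id)).differentiable (by simp)) q.2

lemma pd_neg (f : ℝ × V3 → ℝ) (j : Fin 3) (q : ℝ × V3) :
    pd j (fun r => -f r) q = -pd j f q := by
  unfold pd
  rw [show (fun y => (fun r : ℝ × V3 => -f r) (q.1, y)) = (fun y => -f (q.1, y)) from rfl,
    fderiv_fun_neg]
  simp

lemma pd_mul {f g : ℝ × V3 → ℝ} (hf : ContDiff ℝ (⊤ : ℕ∞) f) (hg : ContDiff ℝ (⊤ : ℕ∞) g)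
    (j : Fin 3) (q : ℝ × V3) :
    pd j (fun r => f r * g r) q = pd j f q * g q + f q * pd j g q := by
  unfold pd
  rw [show (fun y => (fun r : ℝ × V3 => f r * g r) (q.1, y)) =
      (fun y => f (q.1, y) * g (q.1, y)) from rfl, fderiv_fun_mul (diffX hf q) (diffX hg q)]
  simp only [ContinuousLinearMap.add_apply, ContinuousLinearMap.smul_apply, smul_eq_mul]
  ring

lemma pd_sub {f g : ℝ × V3 → ℝ} (hf : ContDiff ℝ (⊤ : ℕ∞) f) (hg : ContDiff ℝ (⊤ : ℕ∞) g)
    (j : Fin 3) (q : ℝ × V3) :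
    pd j (fun r => f r - g r) q = pd j f q - pd j g q := by
  unfold pd
  rw [show (fun y => (fun r : ℝ × V3 => f r - g r) (q.1, y)) =
      (fun y => f (q.1, y) - g (q.1, y)) from rfl, fderiv_fun_sub (diffX hf q) (diffX hg q)]
  simp

lemma pd_dot {A C : ℝ × V3 → V3} (hA : ContDiff ℝ (⊤ : ℕ∞) A) (hC : ContDiff ℝ (⊤ : ℕ∞) C)
    (j : Fin 3) (q : ℝ × V3) :
    pd j (fun r => A r ⬝ᵥ C r) q =
      ∑ i, (pd j (fun r => A r i) q * C q i + A q i * pd j (fun r => C r i) q) := by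
  have hAx : ∀ i : Fin 3, DifferentiableAt ℝ (fun y => A (q.1, y) i) q.2 :=
    fun i => diffX (contDiff_pi.mp hA i) q
  have hCx : ∀ i : Fin 3, DifferentiableAt ℝ (fun y => C (q.1, y) i) q.2 :=
    fun i => diffX (contDiff_pi.mp hC i) q
  unfold pd
  rw [show (fun y => (fun r : ℝ × V3 => A r ⬝ᵥ C r) (q.1, y)) =
      (fun y => ∑ i : Fin 3, A (q.1, y) i * C (q.1, y) i) from rfl,
    fderiv_fun_sum (A := fun i y => A (q.1, y) i * C (q.1, y) i) (fun i _ => (hAx i).mul (hCx i))]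
  simp only [ContinuousLinearMap.sum_apply]
  refine Finset.sum_congr rfl fun i _ => ?_
  rw [fderiv_fun_mul (hAx i) (hCx i)]
  simp only [ContinuousLinearMap.add_apply, ContinuousLinearMap.smul_apply, smul_eq_mul]
  ring

lemma dtS_dot {A C : ℝ × V3 → V3} (hA : ContDiff ℝ (⊤ : ℕ∞) A) (hC : ContDiff ℝ (⊤ : ℕ∞) C)
    (q : ℝ × V3) :
    dtS (fun r => A r ⬝ᵥ C r) q =
      ∑ i, (dtS (fun r => A r i) q * C q i + A q i * dtS (fun r => C r i) q) := by
  have hAt : ∀ i : Fin 3, HasDerivAt (fun s => A (s, q.2) i) (dtS (fun r => A r i) q) q.1 :=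
    fun i => ((((contDiff_pi.mp hA i).comp (contDiff_id.prodMk contDiff_const)).differentiable
      (by simp)) q.1).hasDerivAt
  have hCt : ∀ i : Fin 3, HasDerivAt (fun s => C (s, q.2) i) (dtS (fun r => C r i) q) q.1 :=
    fun i => ((((contDiff_pi.mp hC i).comp (contDiff_id.prodMk contDiff_const)).differentiable
      (by simp)) q.1).hasDerivAt
  have h : HasDerivAt (fun s => ∑ i : Fin 3, A (s, q.2) i * C (s, q.2) i)
      (∑ i : Fin 3, (dtS (fun r => A r i) q * C q i + A q i * dtS (fun r => C r i) q)) q.1 :=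
    HasDerivAt.fun_sum (A := fun i s => A (s, q.2) i * C (s, q.2) i)
      fun i _ => (hAt i).mul (hCt i)
  exact h.deriv

/-- Let `v` be divergence-free, `C` divergence-free and frozen-in
(`∂C/∂t = ∇×(v×C)`), and let `A` satisfy `∂A/∂t + (∇×A)×v = ∇ψ` in the gauge
`ψ = −v·A` (the potential one-form `−ψ dt − A·dx` annihilates `∂_t + v`). Then the
helicity density `A·C` is a Lagrangian invariant: `∂(A·C)/∂t + v·∇(A·C) = 0` everywhere,
i.e. `A·C` is conserved at each point along trajectories of `v`. -/
theorem helicity_density_lagrangian_invariant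
    (v A C : ℝ × V3 → V3) (ψ : ℝ × V3 → ℝ)
    (hv : ContDiff ℝ (⊤ : ℕ∞) v) (hA : ContDiff ℝ (⊤ : ℕ∞) A) (hC : ContDiff ℝ (⊤ : ℕ∞) C)
    (hψ : ContDiff ℝ (⊤ : ℕ∞) ψ)
    (hdv : ∀ q, div3 v q = 0)
    (hdC : ∀ q, div3 C q = 0)
    (hfrozen : ∀ q i, dtV C q i = curl3 (fun r => crossProduct (v r) (C r)) q i)
    (hpot : ∀ q i, dtV A q i + crossProduct (curl3 A q) (v q) i = grad3 ψ q i)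
    (hgauge : ∀ q, ψ q = -(v q ⬝ᵥ A q)) :
    ∀ q, dtS (fun r => A r ⬝ᵥ C r) q + adv v (fun r => A r ⬝ᵥ C r) q = 0 := by
  intro q
  have hvi : ∀ i : Fin 3, ContDiff ℝ (⊤ : ℕ∞) fun r => v r i := fun i => contDiff_pi.mp hv i
  have hCi : ∀ i : Fin 3, ContDiff ℝ (⊤ : ℕ∞) fun r => C r i := fun i => contDiff_pi.mp hC i
  have h1 : pd 0 (fun r => v r 0) q + pd 1 (fun r => v r 1) q + pd 2 (fun r => v r 2) q = 0 := by
    have := hdv q; simpa [div3, Fin.sum_univ_three] using this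
  have h2 : pd 0 (fun r => C r 0) q + pd 1 (fun r => C r 1) q + pd 2 (fun r => C r 2) q = 0 := by
    have := hdC q; simpa [div3, Fin.sum_univ_three] using this
  have hψ' : ψ = fun r => -(v r ⬝ᵥ A r) := funext hgauge
  have hgrad : ∀ i : Fin 3, pd i ψ q =
      -(∑ k, (pd i (fun r => v r k) q * A q k + v q k * pd i (fun r => A r k) q)) := by
    intro i
    rw [hψ', pd_neg (fun r => v r ⬝ᵥ A r), pd_dot hv hA]
  have htA : ∀ i, dtS (fun r => A r i) q = pd i ψ q - crossProduct (curl3 A q) (v q) i := by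
    intro i
    have h := hpot q i
    simp only [dtV, grad3] at h
    linarith
  have htC : ∀ i, dtS (fun r => C r i) q = curl3 (fun r => crossProduct (v r) (C r)) q i :=
    fun i => hfrozen q i
  have hcc : ∀ (a b j : Fin 3), pd j (fun r => v r a * C r b - v r b * C r a) q =
      pd j (fun r => v r a) q * C q b + v q a * pd j (fun r => C r b) q -
      (pd j (fun r => v r b) q * C q a + v q b * pd j (fun r => C r a) q) := by
    intro a b j
    rw [pd_sub ((hvi a).mul (hCi b)) ((hvi b).mul (hCi a)), pd_mul (hvi a) (hCi b),
      pd_mul (hvi b) (hCi a)]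
  rw [dtS_dot hA hC q]
  simp only [adv, pd_dot hA hC, Fin.sum_univ_three]
  rw [htA 0, htA 1, htA 2, htC 0, htC 1, htC 2, hgrad 0, hgrad 1, hgrad 2]
  simp only [curl3, cross_apply, Fin.sum_univ_three, Matrix.cons_val_zero, Matrix.cons_val_one,
    Matrix.head_cons, Matrix.cons_val_two, Matrix.tail_cons]
  simp only [hcc]
  linear_combination (A q 0 * v q 0 + A q 1 * v q 1 + A q 2 * v q 2) * h2 -
    (A q 0 * C q 0 + A q 1 * C q 1 + A q 2 * C q 2) * h1
end
end
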